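/- Let V be a finite-dimensional complex vector space, 𝓕 a filtration on V, N an arbitrary norm on V, and H a Hermitian norm on V. Let N_t^𝓕 (t ≥ 0) be the ray of norms emanating from N associated with 𝓕 via the envelope formula, and H_t^𝓕 the geodesic ray of Hermitian norms emanating from H associated with 𝓕 via an adapted orthonormal basis. Then for every t ∈ [0,∞): d_∞(N_t^𝓕, H_t^𝓕) ≤ d_∞(N, H) + log dim V. -/

import Mathlib

open scoped BigOperators
open Filter Classical

noncomputable section

variable {V : Type*} [AddCommGroup V] [Module ℂ V]

/-- A filtration on a complex vector space `V`: a left-continuous, decreasing family of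
subspaces which equals `⊤` for `t` small enough and `⊥` for `t` large enough. -/
structure IsFiltrationC (F : ℝ → Submodule ℂ V) : Prop where
  antitone : ∀ ⦃s t : ℝ⦄, s ≤ t → F t ≤ F s
  left_cont : ∀ t : ℝ, ∃ ε > 0, ∀ δ : ℝ, 0 < δ → δ < ε → F (t - δ) = F t
  eventually_top : ∃ t₀ : ℝ, ∀ t ≤ t₀, F t = ⊤
  eventually_bot : ∃ t₁ : ℝ, ∀ t, t₁ ≤ t → F t = ⊥

/-- The weight of a vector with respect to a filtration. -/
def filtWeight (F : ℝ → Submodule ℂ V) (s : V) : ℝ :=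
  sSup {l : ℝ | s ∈ F l}

/-- The non-Archimedean norm `χ_𝓕` associated with a filtration. -/
def filtChi (F : ℝ → Submodule ℂ V) (s : V) : ℝ :=
  if s = 0 then 0 else Real.exp (-(filtWeight F s))

/-- The jumping numbers `e_𝓕(j)` of a filtration. -/
def jumpNum (F : ℝ → Submodule ℂ V) (j : ℕ) : ℝ :=
  sSup {t : ℝ | j ≤ Module.finrank ℂ (F t)}

/-- The norm associated with a Hermitian inner product. -/
def hnorm (c : InnerProductSpace.Core ℂ V) : V → ℝ :=
  fun v => Real.sqrt ((c.inner v v).re)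

/-- The `j`-th element of the logarithmic relative spectrum of two norms. -/
def relSpec (N₀ N₁ : V → ℝ) (j : ℕ) : ℝ :=
  sSup {r : ℝ | ∃ W : Submodule ℂ V, Module.finrank ℂ W = j ∧
    r = sInf {x : ℝ | ∃ w ∈ W, w ≠ 0 ∧ x = Real.log (N₁ w / N₀ w)}}

/-- The distance `d_p` between two norms, `p ∈ [1, ∞)`. -/
def dp (p : ℝ) (N₀ N₁ : V → ℝ) : ℝ :=
  ((∑ j ∈ Finset.Icc 1 (Module.finrank ℂ V), |relSpec N₀ N₁ j| ^ p) /
    (Module.finrank ℂ V : ℝ)) ^ (1 / p)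

/-- The distance `d_∞` between two norms. -/
def dInf (N₀ N₁ : V → ℝ) : ℝ :=
  sSup {r : ℝ | ∃ j ∈ Finset.Icc 1 (Module.finrank ℂ V), r = |relSpec N₀ N₁ j|}

/-- A family of vectors is orthonormal with respect to a Hermitian inner product. -/
def OrthonormalFor (c : InnerProductSpace.Core ℂ V) {ι : Type*} (s : ι → V) : Prop :=
  ∀ i j, c.inner (s i) (s j) = if i = j then 1 else 0

/-- A family of vectors is orthogonal with respect to a Hermitian inner product. -/
def OrthogonalFor (c : InnerProductSpace.Core ℂ V) {ι : Type*} (s : ι → V) : Prop :=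
  ∀ i j, i ≠ j → c.inner (s i) (s j) = 0

/-- `c : ℝ → InnerProductSpace.Core ℂ V` is the geodesic ray of Hermitian norms emanating
from `c 0` associated with the filtration `F` via the adapted orthonormal basis `s`:
`s` is orthonormal for `c 0`, `s j ∈ 𝓕^{e_𝓕(j)} V`, and for each `t ≥ 0` the rescaled basis
`(exp (t e_𝓕(i)) • s i)` is orthonormal for `c t`. -/
def IsGeodesicRayFor (F : ℝ → Submodule ℂ V) {n : ℕ} (s : Fin n → V)
    (c : ℝ → InnerProductSpace.Core ℂ V) : Prop :=
  OrthonormalFor (c 0) s ∧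
  (∀ i : Fin n, s i ∈ F (jumpNum F (i.1 + 1))) ∧
  ∀ t : ℝ, 0 ≤ t → ∀ i j : Fin n,
    (c t).inner (Real.exp (t * jumpNum F (i.1 + 1)) • s i)
      (Real.exp (t * jumpNum F (j.1 + 1)) • s j) = if i = j then 1 else 0

/-- A (complex) norm on a vector space. -/
structure IsComplexNorm (N : V → ℝ) : Prop where
  eq_zero_iff : ∀ x : V, N x = 0 ↔ x = 0
  smul : ∀ (a : ℂ) (x : V), N (a • x) = ‖a‖ * N x
  add_le : ∀ x y : V, N (x + y) ≤ N x + N y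


/-- The ray of norms emanating from a norm `N` associated with a filtration `F` via the
envelope formula. -/
def envRay {V : Type*} [AddCommGroup V] [Module ℂ V]
    (F : ℝ → Submodule ℂ V) (N : V → ℝ) (t : ℝ) : V → ℝ :=
  fun f => sInf {r : ℝ | ∃ (m : ℕ) (g : Fin m → V), f = ∑ i, g i ∧
    r = ∑ i, N (g i) * filtChi F (g i) ^ t}

/-!
Every `μ_j(N₀, N₁)` lies between the infimum and the supremum of `log (N₁ / N₀)` over nonzero
vectors, and these are `μ_dim` and `μ_1`; hence `d_∞(N₀, N₁) ≤ B` exactly when `N₀` and `N₁`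
agree up to a factor `e^B`, and it suffices to compare `N_t` and `H_t` pointwise.

Write `D = d_∞(N, H)`. In the adapted basis the coordinates of `v` in the directions with jumping
number below `w(v)` vanish, so `H_t(v) ≤ e^{-t w(v)} H(v) ≤ e^D N(v) χ(v)^t`; applied to every
piece of a decomposition, the triangle inequality gives `H_t ≤ e^D N_t`. Conversely, decomposing
`v` along the basis gives `N_t(v) ≤ e^D ∑ |v_i| e^{-t e_i} ≤ dim V · e^D H_t(v)`.
-/

open Module Real

lemma Real.abs_log_div_le_iff {x y B : ℝ} (hx : 0 < x) (hy : 0 < y) :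
    |log (x / y)| ≤ B ↔ x ≤ exp B * y ∧ y ≤ exp B * x := by
  rw [abs_le, neg_le, ← log_inv, inv_div, log_le_iff_le_exp (div_pos hy hx),
    log_le_iff_le_exp (div_pos hx hy), div_le_iff₀ hx, div_le_iff₀ hy, mul_comm (exp B),
    mul_comm (exp B), and_comm]

lemma Real.abs_sSup_le {s : Set ℝ} {B : ℝ} (hB : 0 ≤ B) (hs : ∀ x ∈ s, |x| ≤ B) :
    |sSup s| ≤ B := by
  rcases s.eq_empty_or_nonempty with rfl | ⟨x, hx⟩
  · simpa using hB
  refine abs_le.2 ⟨?_, Real.sSup_le (fun y hy => (abs_le.1 (hs y hy)).2) hB⟩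
  exact (abs_le.1 (hs x hx)).1.trans
    (le_csSup ⟨B, fun y hy => (abs_le.1 (hs y hy)).2⟩ hx)

lemma Real.abs_sInf_le {s : Set ℝ} {B : ℝ} (hB : 0 ≤ B) (hs : ∀ x ∈ s, |x| ≤ B) :
    |sInf s| ≤ B := by
  rw [Real.sInf_def, abs_neg]
  exact Real.abs_sSup_le hB fun x hx => by simpa using hs (-x) hx

namespace IsComplexNorm

variable {N N' : V → ℝ}

lemma map_zero (hN : IsComplexNorm N) : N 0 = 0 := (hN.eq_zero_iff 0).2 rfl

lemma nonneg (hN : IsComplexNorm N) (x : V) : 0 ≤ N x := by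
  have h := hN.add_le x (-x)
  have hneg : N (-x) = N x := by simpa using hN.smul (-1) x
  rw [add_neg_cancel, hN.map_zero, hneg] at h
  linarith

lemma pos (hN : IsComplexNorm N) {x : V} (hx : x ≠ 0) : 0 < N x :=
  (hN.nonneg x).lt_of_ne fun h => hx ((hN.eq_zero_iff x).1 h.symm)

lemma sum_le (hN : IsComplexNorm N) {ι : Type*} (s : Finset ι) (g : ι → V) :
    N (∑ i ∈ s, g i) ≤ ∑ i ∈ s, N (g i) := by
  induction s using Finset.cons_induction with
  | empty => simp [hN.map_zero]
  | cons _ _ _ ih =>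
    rw [Finset.sum_cons, Finset.sum_cons]
    exact (hN.add_le _ _).trans (by linarith)

lemma div_smul (hN : IsComplexNorm N) (hN' : IsComplexNorm N') {a : ℂ} (ha : a ≠ 0) (x : V) :
    N' (a • x) / N (a • x) = N' x / N x := by
  rw [hN.smul, hN'.smul, mul_div_mul_left _ _ (norm_ne_zero_iff.2 ha)]

def toAddGroupNorm (hN : IsComplexNorm N) : AddGroupNorm V where
  toFun := N
  map_zero' := hN.map_zero
  add_le' := hN.add_le
  neg' x := by simpa using hN.smul (-1) x
  eq_zero_of_map_eq_zero' x := (hN.eq_zero_iff x).1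

/-- The coordinate functionals of a basis are continuous for the topology of `N`. -/
lemma exists_le_exp_mul [FiniteDimensional ℂ V] (hN : IsComplexNorm N) (hN' : IsComplexNorm N') :
    ∃ B : ℝ, 0 ≤ B ∧ ∀ x, N' x ≤ exp B * N x := by
  let : NormedAddCommGroup V := hN.toAddGroupNorm.toNormedAddCommGroup
  let : NormedSpace ℂ V := { norm_smul_le a x := (hN.smul a x).le }
  let b := Module.finBasis ℂ V
  let coord (i : Fin (finrank ℂ V)) : V →L[ℂ] ℂ := LinearMap.toContinuousLinearMap (b.coord i)
  set C := ∑ i, ‖coord i‖ * N' (b i)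
  refine ⟨log (max C 1), log_nonneg (le_max_right _ _), fun x => ?_⟩
  rw [exp_log (by positivity)]
  calc N' x = N' (∑ i, b.repr x i • b i) := by rw [b.sum_repr]
    _ ≤ ∑ i, ‖b.repr x i‖ * N' (b i) := by
        simpa only [hN'.smul] using hN'.sum_le Finset.univ fun i => b.repr x i • b i
    _ ≤ ∑ i, ‖coord i‖ * N x * N' (b i) := by
        gcongr with i
        · exact hN'.nonneg _
        · exact (coord i).le_opNorm x
    _ = C * N x := by rw [Finset.sum_mul]; exact Finset.sum_congr rfl fun i _ => by ring
    _ ≤ max C 1 * N x := by gcongr; exacts [hN.nonneg x, le_max_left _ _]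

end IsComplexNorm

namespace IsFiltrationC

variable {F : ℝ → Submodule ℂ V}

/-- Left continuity of `F` is what makes the supremum attained. -/
lemma le_sSup_setOf_iff (hF : IsFiltrationC F) {P : Submodule ℂ V → Prop} (hP : Monotone P)
    (htop : P ⊤) (hbot : ¬ P ⊥) {l : ℝ} : l ≤ sSup {t | P (F t)} ↔ P (F l) := by
  obtain ⟨t₀, h₀⟩ := hF.eventually_top
  obtain ⟨t₁, h₁⟩ := hF.eventually_bot
  have hne : {t | P (F t)}.Nonempty := ⟨t₀, by simpa [h₀ t₀ le_rfl] using htop⟩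
  have hbdd : BddAbove {t | P (F t)} := ⟨t₁, fun t ht => by
    by_contra! h
    exact hbot (h₁ t h.le ▸ ht)⟩
  have hsup : P (F (sSup {t | P (F t)})) := by
    obtain ⟨ε, hε, hεF⟩ := hF.left_cont (sSup {t | P (F t)})
    obtain ⟨x, hx, hlt⟩ := exists_lt_of_lt_csSup hne (sub_lt_self _ (half_pos hε))
    rw [← hεF (ε / 2) (half_pos hε) (half_lt_self hε)]
    exact hP (hF.antitone hlt.le) hx
  exact ⟨fun hl => hP (hF.antitone hl) hsup, fun hl => le_csSup hbdd hl⟩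

lemma mem_iff_le_filtWeight (hF : IsFiltrationC F) {s : V} (hs : s ≠ 0) {l : ℝ} :
    s ∈ F l ↔ l ≤ filtWeight F s :=
  (hF.le_sSup_setOf_iff (P := (s ∈ ·)) (fun _ _ h hs => h hs) trivial
    (by simpa using hs)).symm

lemma le_jumpNum_iff [FiniteDimensional ℂ V] (hF : IsFiltrationC F) {j : ℕ} (hj : 1 ≤ j)
    (hjV : j ≤ finrank ℂ V) {l : ℝ} : l ≤ jumpNum F j ↔ j ≤ finrank ℂ (F l) :=
  hF.le_sSup_setOf_iff (P := (j ≤ finrank ℂ ·))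
    (fun _ _ h hj => hj.trans (Submodule.finrank_mono h)) (by simpa using hjV)
    (by simpa [Nat.one_le_iff_ne_zero] using hj)

lemma filtChi_rpow_le (hF : IsFiltrationC F) {s : V} {l t : ℝ} (hs : s ∈ F l) (ht : 0 ≤ t) :
    filtChi F s ^ t ≤ exp (-(t * l)) := by
  by_cases hs0 : s = 0
  · rcases ht.eq_or_lt with rfl | ht
    · simp
    · simp [filtChi, hs0, zero_rpow ht.ne', (exp_pos _).le]
  rw [filtChi, if_neg hs0, ← exp_mul, exp_le_exp]
  nlinarith [(hF.mem_iff_le_filtWeight hs0).1 hs]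

/-- The first `dim F^l` vectors of an adapted basis span `F^l`. -/
lemma repr_eq_zero_of_mem [FiniteDimensional ℂ V] (hF : IsFiltrationC F) {n : ℕ}
    (b : Basis (Fin n) ℂ V) (hb : ∀ i : Fin n, b i ∈ F (jumpNum F (i.1 + 1)))
    {l : ℝ} {v : V} (hv : v ∈ F l) {i : Fin n} (hi : jumpNum F (i.1 + 1) < l) :
    b.repr v i = 0 := by
  have hn : finrank ℂ V = n := by rw [finrank_eq_card_basis b, Fintype.card_fin]
  set m := finrank ℂ (F l)
  have hmn : m ≤ n := hn ▸ Submodule.finrank_le (F l)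
  have hjump (k : Fin n) : l ≤ jumpNum F (k.1 + 1) ↔ k.1 < m :=
    hF.le_jumpNum_iff (by omega) (by omega)
  have hspan : Submodule.span ℂ (b '' {k | k.1 < m}) = F l := by
    refine Submodule.eq_of_le_of_finrank_le ?_ ?_
    · rw [Submodule.span_le]
      rintro _ ⟨k, hk, rfl⟩
      exact hF.antitone ((hjump k).2 hk) (hb k)
    · have hli : LinearIndependent ℂ fun k : {k : Fin n | k.1 < m} => b k :=
        b.linearIndependent.comp _ Subtype.val_injective
      rw [Set.image_eq_range, finrank_span_eq_card hli, Fintype.card_subtype]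
      simp only [Set.mem_ofPred_eq, Fin.card_filter_val_lt, min_eq_right hmn, m, le_refl]
  rw [← hspan, Basis.mem_span_image] at hv
  by_contra h
  exact (hjump i).2.mt (not_le.2 hi) (hv (Finsupp.mem_support_iff.2 h))

end IsFiltrationC

section Envelope

variable {F : ℝ → Submodule ℂ V} {N : V → ℝ}

lemma filtChi_nonneg (F : ℝ → Submodule ℂ V) (s : V) : 0 ≤ filtChi F s := by
  unfold filtChi
  split_ifs
  exacts [le_rfl, (exp_pos _).le]

lemma sum_mul_filtChi_rpow_nonneg (hN : IsComplexNorm N) (t : ℝ) {m : ℕ} (g : Fin m → V) :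
    0 ≤ ∑ i, N (g i) * filtChi F (g i) ^ t :=
  Finset.sum_nonneg fun _ _ => mul_nonneg (hN.nonneg _) (rpow_nonneg (filtChi_nonneg F _) t)

lemma envRay_nonneg (hN : IsComplexNorm N) (t : ℝ) (f : V) : 0 ≤ envRay F N t f :=
  Real.sInf_nonneg <| by
    rintro _ ⟨m, g, -, rfl⟩
    exact sum_mul_filtChi_rpow_nonneg hN t g

lemma envRay_le (hN : IsComplexNorm N) (t : ℝ) {m : ℕ} (g : Fin m → V) :
    envRay F N t (∑ i, g i) ≤ ∑ i, N (g i) * filtChi F (g i) ^ t := by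
  refine csInf_le ⟨0, ?_⟩ ⟨m, g, rfl, rfl⟩
  rintro _ ⟨m', g', -, rfl⟩
  exact sum_mul_filtChi_rpow_nonneg hN t g'

lemma le_mul_envRay {M : V → ℝ} (hM : IsComplexNorm M) {C t : ℝ} (hC : 0 < C)
    (h : ∀ g, M g ≤ C * (N g * filtChi F g ^ t)) (f : V) : M f ≤ C * envRay F N t f := by
  rw [← div_le_iff₀' hC]
  refine le_csInf ⟨_, 1, fun _ => f, by simp, rfl⟩ ?_
  rintro _ ⟨m, g, rfl, rfl⟩
  rw [div_le_iff₀' hC, Finset.mul_sum]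
  exact (hM.sum_le _ _).trans (Finset.sum_le_sum fun i _ => h (g i))

end Envelope

section Spectrum

variable {N₀ N₁ : V → ℝ}

lemma dInf_nonneg : 0 ≤ dInf N₀ N₁ :=
  Real.sSup_nonneg <| by
    rintro _ ⟨j, -, rfl⟩
    exact abs_nonneg _

lemma abs_relSpec_le_dInf {j : ℕ} (hj : j ∈ Finset.Icc 1 (finrank ℂ V)) :
    |relSpec N₀ N₁ j| ≤ dInf N₀ N₁ := by
  refine le_csSup ⟨∑ k ∈ Finset.Icc 1 (finrank ℂ V), |relSpec N₀ N₁ k|, ?_⟩ ⟨j, hj, rfl⟩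
  rintro _ ⟨k, hk, rfl⟩
  exact Finset.single_le_sum (f := fun k => |relSpec N₀ N₁ k|) (fun _ _ => abs_nonneg _) hk

lemma abs_sInf_log_div_le {B : ℝ} (hB : 0 ≤ B) (h : ∀ v ≠ 0, |log (N₁ v / N₀ v)| ≤ B)
    (W : Submodule ℂ V) : |sInf {x | ∃ w ∈ W, w ≠ 0 ∧ x = log (N₁ w / N₀ w)}| ≤ B :=
  Real.abs_sInf_le hB <| by
    rintro _ ⟨w, -, hw, rfl⟩
    exact h w hw

lemma abs_relSpec_le {B : ℝ} (hB : 0 ≤ B) (h : ∀ v ≠ 0, |log (N₁ v / N₀ v)| ≤ B) (j : ℕ) :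
    |relSpec N₀ N₁ j| ≤ B :=
  Real.abs_sSup_le hB <| by
    rintro _ ⟨W, -, rfl⟩
    exact abs_sInf_log_div_le hB h W

lemma dInf_le_of_le_exp_mul (hN₁ : IsComplexNorm N₁) {B : ℝ} (hB : 0 ≤ B)
    (h : ∀ v, N₁ v ≤ exp B * N₀ v ∧ N₀ v ≤ exp B * N₁ v) : dInf N₀ N₁ ≤ B := by
  refine Real.sSup_le ?_ hB
  rintro _ ⟨j, -, rfl⟩
  refine abs_relSpec_le hB (fun v hv => ?_) j
  have hN₀v : 0 < N₀ v := pos_of_mul_pos_right ((hN₁.pos hv).trans_le (h v).1) (exp_pos B).le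
  exact (abs_log_div_le_iff (hN₁.pos hv) hN₀v).2 (h v)

variable [FiniteDimensional ℂ V]

lemma exists_abs_log_div_le (hN₀ : IsComplexNorm N₀) (hN₁ : IsComplexNorm N₁) :
    ∃ B, 0 ≤ B ∧ ∀ v ≠ 0, |log (N₁ v / N₀ v)| ≤ B := by
  obtain ⟨B₁, hB₁, h₁⟩ := hN₀.exists_le_exp_mul hN₁
  obtain ⟨B₀, -, h₀⟩ := hN₁.exists_le_exp_mul hN₀
  refine ⟨max B₀ B₁, le_max_of_le_right hB₁, fun v hv => ?_⟩
  rw [abs_log_div_le_iff (hN₁.pos hv) (hN₀.pos hv)]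
  exact ⟨(h₁ v).trans (mul_le_mul_of_nonneg_right (exp_le_exp.2 (le_max_right _ _))
      (hN₀.nonneg v)),
    (h₀ v).trans (mul_le_mul_of_nonneg_right (exp_le_exp.2 (le_max_left _ _)) (hN₁.nonneg v))⟩

lemma log_div_le_relSpec_one (hN₀ : IsComplexNorm N₀) (hN₁ : IsComplexNorm N₁) {v : V}
    (hv : v ≠ 0) : log (N₁ v / N₀ v) ≤ relSpec N₀ N₁ 1 := by
  obtain ⟨B, hB, h⟩ := exists_abs_log_div_le hN₀ hN₁
  refine le_csSup_of_le ⟨B, ?_⟩ ⟨ℂ ∙ v, finrank_span_singleton hv, rfl⟩ ?_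
  · rintro _ ⟨W, -, rfl⟩
    exact (abs_le.1 (abs_sInf_log_div_le hB h W)).2
  · refine le_csInf ⟨_, v, Submodule.mem_span_singleton_self v, hv, rfl⟩ ?_
    rintro _ ⟨w, hw, hw0, rfl⟩
    obtain ⟨a, rfl⟩ := Submodule.mem_span_singleton.1 hw
    rw [hN₀.div_smul hN₁ (left_ne_zero_of_smul hw0)]

lemma relSpec_finrank_le_log_div (hN₀ : IsComplexNorm N₀) (hN₁ : IsComplexNorm N₁) {v : V}
    (hv : v ≠ 0) : relSpec N₀ N₁ (finrank ℂ V) ≤ log (N₁ v / N₀ v) := by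
  obtain ⟨B, -, h⟩ := exists_abs_log_div_le hN₀ hN₁
  refine csSup_le ⟨_, ⊤, finrank_top ℂ V, rfl⟩ ?_
  rintro _ ⟨W, hW, rfl⟩
  rw [Submodule.eq_top_of_finrank_eq hW]
  refine csInf_le ⟨-B, ?_⟩ ⟨v, Submodule.mem_top, hv, rfl⟩
  rintro _ ⟨w, -, hw, rfl⟩
  exact (abs_le.1 (h w hw)).1

lemma abs_log_div_le_dInf (hN₀ : IsComplexNorm N₀) (hN₁ : IsComplexNorm N₁) {v : V}
    (hv : v ≠ 0) : |log (N₁ v / N₀ v)| ≤ dInf N₀ N₁ := by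
  have hV : 1 ≤ finrank ℂ V := finrank_pos_iff_exists_ne_zero.2 ⟨v, hv⟩
  have hone := abs_le.1 (abs_relSpec_le_dInf (N₀ := N₀) (N₁ := N₁) (Finset.mem_Icc.2 ⟨le_rfl, hV⟩))
  have htop := abs_le.1 (abs_relSpec_le_dInf (N₀ := N₀) (N₁ := N₁) (Finset.mem_Icc.2 ⟨hV, le_rfl⟩))
  exact abs_le.2 ⟨by linarith [relSpec_finrank_le_log_div hN₀ hN₁ hv],
    by linarith [log_div_le_relSpec_one hN₀ hN₁ hv]⟩

lemma le_exp_dInf_mul (hN₀ : IsComplexNorm N₀) (hN₁ : IsComplexNorm N₁) (v : V) :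
    N₁ v ≤ exp (dInf N₀ N₁) * N₀ v ∧ N₀ v ≤ exp (dInf N₀ N₁) * N₁ v := by
  by_cases hv : v = 0
  · simp [hv, hN₀.map_zero, hN₁.map_zero]
  exact (abs_log_div_le_iff (hN₁.pos hv) (hN₀.pos hv)).1 (abs_log_div_le_dInf hN₀ hN₁ hv)

end Spectrum

section Hermitian

lemma hnorm_isComplexNorm (c : InnerProductSpace.Core ℂ V) : IsComplexNorm (hnorm c) := by
  let : NormedAddCommGroup V := c.toNormedAddCommGroup
  let : InnerProductSpace ℂ V := InnerProductSpace.ofCore c.toCore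
  exact ⟨fun x => norm_eq_zero (E := V) (a := x), norm_smul, norm_add_le⟩

lemma hnorm_sum_smul_sq (c : InnerProductSpace.Core ℂ V) {ι : Type*} [Fintype ι] {u : ι → V}
    (hu : OrthonormalFor c u) (a : ι → ℂ) :
    hnorm c (∑ i, a i • u i) ^ 2 = ∑ i, ‖a i‖ ^ 2 := by
  let : NormedAddCommGroup V := c.toNormedAddCommGroup
  let : InnerProductSpace ℂ V := InnerProductSpace.ofCore c.toCore
  have hu' : Orthonormal ℂ u := orthonormal_iff_ite.2 hu
  change ‖∑ i, a i • u i‖ ^ 2 = _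
  rw [← RCLike.ofReal_inj (K := ℂ), RCLike.ofReal_pow, ← inner_self_eq_norm_sq_to_K,
    hu'.inner_sum]
  push_cast
  refine Finset.sum_congr rfl fun i _ => ?_
  rw [← RCLike.conj_mul]

end Hermitian

namespace IsGeodesicRayFor

variable {F : ℝ → Submodule ℂ V} {n : ℕ} {b : Basis (Fin n) ℂ V}
  {c : ℝ → InnerProductSpace.Core ℂ V} {t : ℝ}

lemma hnorm_sq (hray : IsGeodesicRayFor F b c) (ht : 0 ≤ t) (v : V) :
    hnorm (c t) v ^ 2 = ∑ i, (‖b.repr v i‖ * exp (-(t * jumpNum F (i.1 + 1)))) ^ 2 := by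
  have hu : OrthonormalFor (c t) fun i => (exp (t * jumpNum F (i.1 + 1)) : ℂ) • b i := by
    intro i j
    convert hray.2.2 t ht i j using 2 <;> exact Complex.coe_smul _ _
  have hv : v = ∑ i, (b.repr v i * (exp (-(t * jumpNum F (i.1 + 1))) : ℂ)) •
      ((exp (t * jumpNum F (i.1 + 1)) : ℂ) • b i) := by
    conv_lhs => rw [← b.sum_repr v]
    refine Finset.sum_congr rfl fun i _ => ?_
    rw [smul_smul, mul_assoc, ← Complex.ofReal_mul, ← exp_add, neg_add_cancel, exp_zero,
      Complex.ofReal_one, mul_one]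
  conv_lhs => rw [hv, hnorm_sum_smul_sq _ hu]
  simp only [norm_mul, Complex.norm_real, norm_of_nonneg (exp_pos _).le]

lemma norm_repr_mul_le_hnorm (hray : IsGeodesicRayFor F b c) (ht : 0 ≤ t) (v : V) (i : Fin n) :
    ‖b.repr v i‖ * exp (-(t * jumpNum F (i.1 + 1))) ≤ hnorm (c t) v := by
  rw [← pow_le_pow_iff_left₀ (by positivity) ((hnorm_isComplexNorm _).nonneg v) two_ne_zero,
    hray.hnorm_sq ht]
  exact Finset.single_le_sum (f := fun j => (‖b.repr v j‖ * exp (-(t * jumpNum F (j.1 + 1)))) ^ 2)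
    (fun j _ => sq_nonneg _) (Finset.mem_univ i)

lemma envRay_le_card_mul (hray : IsGeodesicRayFor F b c) (hF : IsFiltrationC F)
    {N : V → ℝ} (hN : IsComplexNorm N) (ht : 0 ≤ t) {D : ℝ}
    (hD : ∀ v, N v ≤ exp D * hnorm (c 0) v) (v : V) :
    envRay F N t v ≤ n * (exp D * hnorm (c t) v) := by
  have hb (i : Fin n) : N (b i) ≤ exp D := by
    simpa [hnorm, hray.1 i i] using hD (b i)
  have hterm (i : Fin n) :
      N (b.repr v i • b i) * filtChi F (b.repr v i • b i) ^ t ≤ exp D * hnorm (c t) v :=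
    calc N (b.repr v i • b i) * filtChi F (b.repr v i • b i) ^ t
        ≤ ‖b.repr v i‖ * exp D * exp (-(t * jumpNum F (i.1 + 1))) := by
          rw [hN.smul]
          gcongr
          · exact rpow_nonneg (filtChi_nonneg F _) t
          · exact hb i
          · exact hF.filtChi_rpow_le (Submodule.smul_mem _ _ (hray.2.1 i)) ht
      _ = exp D * (‖b.repr v i‖ * exp (-(t * jumpNum F (i.1 + 1)))) := by ring
      _ ≤ exp D * hnorm (c t) v := by gcongr; exact hray.norm_repr_mul_le_hnorm ht v i
  calc envRay F N t v = envRay F N t (∑ i, b.repr v i • b i) := by rw [b.sum_repr]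
    _ ≤ ∑ i, N (b.repr v i • b i) * filtChi F (b.repr v i • b i) ^ t := envRay_le hN t _
    _ ≤ ∑ _i : Fin n, exp D * hnorm (c t) v := Finset.sum_le_sum fun i _ => hterm i
    _ = n * (exp D * hnorm (c t) v) := by simp

variable [FiniteDimensional ℂ V]

lemma hnorm_le_exp_neg_mul_hnorm (hray : IsGeodesicRayFor F b c) (hF : IsFiltrationC F)
    (ht : 0 ≤ t) {l : ℝ} {v : V} (hv : v ∈ F l) :
    hnorm (c t) v ≤ exp (-(t * l)) * hnorm (c 0) v := by
  have hcoord (i : Fin n) :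
      ‖b.repr v i‖ * exp (-(t * jumpNum F (i.1 + 1))) ≤ exp (-(t * l)) * ‖b.repr v i‖ := by
    by_cases hi : jumpNum F (i.1 + 1) < l
    · simp [hF.repr_eq_zero_of_mem b hray.2.1 hv hi]
    · rw [mul_comm]
      gcongr
      exact not_lt.1 hi
  rw [← pow_le_pow_iff_left₀ ((hnorm_isComplexNorm _).nonneg v)
      (mul_nonneg (exp_pos _).le ((hnorm_isComplexNorm _).nonneg v)) two_ne_zero,
    mul_pow, hray.hnorm_sq ht, hray.hnorm_sq le_rfl, Finset.mul_sum]
  refine Finset.sum_le_sum fun i _ => ?_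
  rw [zero_mul, neg_zero, exp_zero, mul_one, ← mul_pow]
  exact pow_le_pow_left₀ (by positivity) (hcoord i) 2

lemma hnorm_le_exp_mul_envRay (hray : IsGeodesicRayFor F b c) (hF : IsFiltrationC F)
    {N : V → ℝ} (hN : IsComplexNorm N) (ht : 0 ≤ t) {D : ℝ}
    (hD : ∀ v, hnorm (c 0) v ≤ exp D * N v) (f : V) :
    hnorm (c t) f ≤ exp D * envRay F N t f := by
  refine le_mul_envRay (hnorm_isComplexNorm _) (exp_pos D) (fun g => ?_) f
  by_cases hg : g = 0
  · simp [hg, (hnorm_isComplexNorm _).map_zero, hN.map_zero]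
  have hw : g ∈ F (filtWeight F g) := (hF.mem_iff_le_filtWeight hg).2 le_rfl
  calc hnorm (c t) g ≤ exp (-(t * filtWeight F g)) * hnorm (c 0) g :=
        hray.hnorm_le_exp_neg_mul_hnorm hF ht hw
    _ ≤ exp (-(t * filtWeight F g)) * (exp D * N g) := by gcongr; exact hD g
    _ = exp D * (N g * filtChi F g ^ t) := by
        rw [filtChi, if_neg hg, ← exp_mul, neg_mul, mul_comm (filtWeight F g) t]
        ring

end IsGeodesicRayFor

/-- for every `t ≥ 0`,
`d_∞(N_t^𝓕, H_t^𝓕) ≤ d_∞(N, H) + log (dim V)`. -/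
theorem envRay_geodesicRay_dInf_le
    {V : Type*} [AddCommGroup V] [Module ℂ V] [FiniteDimensional ℂ V]
    {n : ℕ} (F : ℝ → Submodule ℂ V) (hF : IsFiltrationC F)
    (N : V → ℝ) (hN : IsComplexNorm N)
    (b : Module.Basis (Fin n) ℂ V) (c : ℝ → InnerProductSpace.Core ℂ V)
    (hray : IsGeodesicRayFor F (⇑b) c) :
    ∀ t : ℝ, 0 ≤ t →
      dInf (envRay F N t) (hnorm (c t)) ≤
        dInf N (hnorm (c 0)) + Real.log (Module.finrank ℂ V) := by
  intro t ht
  set D := dInf N (hnorm (c 0))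
  have hD (v : V) := le_exp_dInf_mul hN (hnorm_isComplexNorm (c 0)) v
  have hn : (finrank ℂ V : ℝ) = n := by rw [finrank_eq_card_basis b, Fintype.card_fin]
  have hlog : 0 ≤ log (finrank ℂ V) := log_natCast_nonneg _
  have hHt := hnorm_isComplexNorm (c t)
  refine dInf_le_of_le_exp_mul hHt (add_nonneg dInf_nonneg hlog) fun v => ⟨?_, ?_⟩
  · calc hnorm (c t) v ≤ exp D * envRay F N t v :=
          hray.hnorm_le_exp_mul_envRay hF hN ht (fun v => (hD v).1) v
      _ ≤ exp (D + log (finrank ℂ V)) * envRay F N t v := by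
          gcongr
          exacts [envRay_nonneg hN t v, le_add_of_nonneg_right hlog]
  · calc envRay F N t v ≤ n * (exp D * hnorm (c t) v) :=
          hray.envRay_le_card_mul hF hN ht (fun v => (hD v).2) v
      _ ≤ exp (log (finrank ℂ V)) * (exp D * hnorm (c t) v) := by
          rw [← hn]
          gcongr
          exacts [mul_nonneg (exp_pos D).le (hHt.nonneg v), le_exp_log _]
      _ = exp (D + log (finrank ℂ V)) * hnorm (c t) v := by rw [exp_add]; ring

end
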